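/- arXiv:1203.1077 — 3 statements merged into one kernel-verified Lean document; each statement's English description precedes it below -/
import Mathlib

section
/- The radial function w(r) = η₀(r) + 2r²/(1+r²) - (1/2)η₀(r)² + ((1-r²)/(1+r²))∫₁^{1+r²} (log t)/(1-t) dt, where η₀(r) = -log(1+r²), satisfies the ODE -w''(r) - w'(r)/r = 4e^{2η₀(r)}(η₀(r) + η₀(r)² + 2w(r)) for r > 0, with w(0) = 0 and w'(0) = 0. -/
/-!
Write `w r = W (r ^ 2)`. For such functions the radial Laplacian is `4 V'(r²)`, where
`V u = u W'(u)` is the flux, so the equation becomes an identity between elementary functions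
of `u = r²` and `spence (1 + u)`, using only `spence' x = log x / (1 - x)`. Since the integrand is
bounded by `1` on `[1, ∞)`, `W u = O(u)` as `u → 0⁺`, so `w r = O(r²)` and `w'(0) = 0`.
-/

open Real MeasureTheory intervalIntegral Filter Topology Asymptotics

theorem hasDerivAt_comp_sq_zero {W : ℝ → ℝ} (hW : W =O[𝓝[≥] 0] id) :
    HasDerivAt (fun r => W (r ^ 2)) 0 0 := by
  have hW0 : W 0 = 0 := mem_of_mem_nhdsWithin Set.self_mem_Ici hW.eq_zero_imp rfl
  have hsq : Tendsto (fun r : ℝ => r ^ 2) (𝓝 0) (𝓝[≥] 0) :=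
    tendsto_nhdsWithin_of_tendsto_nhds_of_eventually_within _
      (by simpa using (continuous_pow 2).tendsto (0 : ℝ)) (.of_forall fun r => sq_nonneg r)
  rw [hasDerivAt_iff_isLittleO]
  simpa [hW0, Function.comp_def] using
    (hW.comp_tendsto hsq).trans_isLittleO (isLittleO_pow_id one_lt_two)

theorem deriv_deriv_add_deriv_div_comp_sq {W V : ℝ → ℝ} {r a : ℝ} (hr : r ≠ 0)
    (hW : ∀ᶠ u in 𝓝 (r ^ 2), HasDerivAt W (V u / u) u) (hV : HasDerivAt V a (r ^ 2)) :
    deriv (deriv fun x => W (x ^ 2)) r + deriv (fun x => W (x ^ 2)) r / r = 4 * a := by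
  have hflux : ∀ᶠ x in 𝓝 r, HasDerivAt (fun x => W (x ^ 2)) (2 * V (x ^ 2) / x) x := by
    filter_upwards [eventually_ne_nhds hr,
      ((continuous_pow 2).tendsto r).eventually hW] with x hx hWx
    refine (hWx.comp (h := fun x => x ^ 2) x (hasDerivAt_pow 2 x)).congr_deriv ?_
    field_simp
    ring
  have hflux_deriv : HasDerivAt (fun x => 2 * V (x ^ 2) / x)
      ((2 * (a * (2 * r)) * r - 2 * V (r ^ 2) * 1) / r ^ 2) r := by
    refine (((hV.comp (h := fun x => x ^ 2) r (hasDerivAt_pow 2 r)).const_mul 2).div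
      (hasDerivAt_id r) hr).congr_deriv ?_
    simp
  have hd : deriv (fun x => W (x ^ 2)) =ᶠ[𝓝 r] fun x => 2 * V (x ^ 2) / x :=
    hflux.mono fun x hx => hx.deriv
  rw [hd.deriv_eq, hflux_deriv.deriv, hflux.self_of_nhds.deriv]
  field_simp
  ring

/-- Spence's function in SciPy's convention: `spence x = Li₂ (1 - x)`. -/
noncomputable def spence (x : ℝ) : ℝ := ∫ t in (1 : ℝ)..x, log t / (1 - t)

theorem abs_log_div_one_sub_le_one {t : ℝ} (ht : 1 ≤ t) : |log t / (1 - t)| ≤ 1 := by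
  rcases ht.eq_or_lt with rfl | ht
  · simp
  rw [abs_div, abs_of_nonneg (log_nonneg ht.le), abs_of_neg (by linarith), div_le_one (by linarith)]
  linarith [log_le_sub_one_of_pos (by linarith : 0 < t)]

theorem measurable_log_div_one_sub : Measurable fun t : ℝ => log t / (1 - t) := by
  fun_prop

/- At `t = 1` the integrand takes the junk value `0` while its limit is `-1`, so integrability
comes from boundedness rather than continuity. -/
theorem intervalIntegrable_log_div_one_sub {b : ℝ} (hb : 1 ≤ b) :
    IntervalIntegrable (fun t => log t / (1 - t)) volume 1 b := by
  rw [intervalIntegrable_iff, Set.uIoc_of_le hb]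
  refine Measure.integrableOn_of_bounded (M := 1) measure_Ioc_lt_top.ne
    measurable_log_div_one_sub.aestronglyMeasurable ?_
  filter_upwards [ae_restrict_mem measurableSet_Ioc] with t ht
  exact abs_log_div_one_sub_le_one ht.1.le

theorem abs_spence_le {x : ℝ} (hx : 1 ≤ x) : |spence x| ≤ x - 1 := by
  have h := norm_integral_le_of_norm_le_const (a := 1) (b := x) (C := 1)
    (f := fun t => log t / (1 - t)) fun t ht => by
      rw [Set.uIoc_of_le hx] at ht
      exact abs_log_div_one_sub_le_one ht.1.le
  simpa [spence, abs_of_nonneg (sub_nonneg.2 hx)] using h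

theorem hasDerivAt_spence {x : ℝ} (hx : 1 < x) : HasDerivAt spence (log x / (1 - x)) x :=
  integral_hasDerivAt_right (intervalIntegrable_log_div_one_sub hx.le)
    measurable_log_div_one_sub.aestronglyMeasurable.stronglyMeasurableAtFilter
    ((continuousAt_log (by positivity)).div (by fun_prop) (by linarith))

/-- `w r = wProfile (r ^ 2)`. -/
noncomputable def wProfile (u : ℝ) : ℝ :=
  -log (1 + u) + 2 * u / (1 + u) - 1 / 2 * log (1 + u) ^ 2 + (1 - u) / (1 + u) * spence (1 + u)

/-- `wFlux u = u * wProfile' u`, so that `r * w' r = 2 * wFlux (r ^ 2)`. -/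
noncomputable def wFlux (u : ℝ) : ℝ :=
  -u / (1 + u) + 2 * u / (1 + u) ^ 2 - log (1 + u) / (1 + u) - 2 * u * spence (1 + u) / (1 + u) ^ 2

theorem hasDerivAt_log_one_add {u : ℝ} (hu : 1 + u ≠ 0) :
    HasDerivAt (fun x => log (1 + x)) (1 / (1 + u)) u := by
  simpa using ((hasDerivAt_id u).const_add 1).log hu

theorem hasDerivAt_spence_one_add {u : ℝ} (hu : 0 < u) :
    HasDerivAt (fun x => spence (1 + x)) (-log (1 + u) / u) u := by
  refine (HasDerivAt.comp_const_add 1 u (hasDerivAt_spence (by linarith))).congr_deriv ?_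
  rw [show 1 - (1 + u) = -u by ring, div_neg, neg_div]

theorem hasDerivAt_wProfile {u : ℝ} (hu : 0 < u) : HasDerivAt wProfile (wFlux u / u) u := by
  have hs : 1 + u ≠ 0 := by positivity
  have hL := hasDerivAt_log_one_add hs
  have hid := (hasDerivAt_id u).const_add 1
  have hF := hasDerivAt_spence_one_add hu
  refine ((((hL.neg.add (((hasDerivAt_id u).const_mul 2).div hid hs)).sub
    ((hL.pow 2).const_mul (1 / 2))).add
      ((((hasDerivAt_id u).const_sub 1).div hid hs).mul hF))).congr_deriv ?_
  simp only [wFlux, id, Pi.div_apply]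
  field_simp
  ring

theorem hasDerivAt_wFlux {u : ℝ} (hu : 0 < u) :
    HasDerivAt wFlux
      ((2 * (u - 1) * spence (1 + u) + 3 * (1 + u) * log (1 + u) - 4 * u) / (1 + u) ^ 3) u := by
  have hs : 1 + u ≠ 0 := by positivity
  have hL := hasDerivAt_log_one_add hs
  have hid := (hasDerivAt_id u).const_add 1
  have hF := hasDerivAt_spence_one_add hu
  have hs2 : (1 + u) ^ 2 ≠ 0 := pow_ne_zero 2 hs
  refine (((((hasDerivAt_id u).neg.div hid hs).add
    (((hasDerivAt_id u).const_mul 2).div (hid.pow 2) hs2)).sub (hL.div hid hs)).sub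
    ((((hasDerivAt_id u).const_mul 2).mul hF).div (hid.pow 2) hs2)).congr_deriv ?_
  simp only [id, Pi.neg_apply, Pi.mul_apply, Pi.pow_apply]
  field_simp
  ring

theorem abs_wProfile_le {u : ℝ} (h0 : 0 ≤ u) (h1 : u ≤ 1) : |wProfile u| ≤ 5 * u := by
  have hL0 : 0 ≤ log (1 + u) := log_nonneg (by linarith)
  have hLu : log (1 + u) ≤ u := by linarith [log_le_sub_one_of_pos (by linarith : 0 < 1 + u)]
  have hF : |spence (1 + u)| ≤ u := by simpa using abs_spence_le (x := 1 + u) (by linarith)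
  have hc : |(1 - u) / (1 + u)| ≤ 1 := by
    rw [abs_div, abs_of_nonneg (by linarith : 0 ≤ 1 - u), abs_of_pos (by linarith),
      div_le_one (by linarith)]
    linarith
  have hcF : |(1 - u) / (1 + u) * spence (1 + u)| ≤ u := by
    rw [abs_mul]
    nlinarith [abs_nonneg ((1 - u) / (1 + u)), abs_nonneg (spence (1 + u))]
  have hq0 : 0 ≤ 2 * u / (1 + u) := by positivity
  have hq : 2 * u / (1 + u) ≤ 2 * u := div_le_self (by linarith) (by linarith)
  rw [wProfile, abs_le]
  constructor <;> nlinarith [abs_le.mp hcF]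

theorem wProfile_isBigO : wProfile =O[𝓝[≥] 0] id :=
  IsBigO.of_bound 5 <| mem_of_superset (Icc_mem_nhdsGE zero_lt_one) fun u hu => by
    simpa [abs_of_nonneg hu.1] using abs_wProfile_le hu.1 hu.2

/-- The explicit radial function `w` solves
`-w'' - w'/r = 4 e^{2η₀}(η₀ + η₀² + 2w)` for `r > 0`, with `w(0)=0`, `w'(0)=0`,
where `η₀(r) = -log(1+r²)`. -/
theorem stmt3 (η₀ w : ℝ → ℝ)
    (hη₀ : ∀ r, η₀ r = -Real.log (1 + r ^ 2))
    (hw : ∀ r, w r = η₀ r + 2 * r ^ 2 / (1 + r ^ 2) - (1 / 2) * (η₀ r) ^ 2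
        + (1 - r ^ 2) / (1 + r ^ 2) * ∫ t in (1 : ℝ)..(1 + r ^ 2), Real.log t / (1 - t)) :
    (∀ r > 0, -(deriv (deriv w) r) - deriv w r / r
        = 4 * Real.exp (2 * η₀ r) * (η₀ r + (η₀ r) ^ 2 + 2 * w r)) ∧
    w 0 = 0 ∧ deriv w 0 = 0 := by
  have hw_eq : w = fun r => wProfile (r ^ 2) := funext fun r => by
    rw [hw, hη₀, wProfile, spence]
    ring
  subst hw_eq
  refine ⟨fun r hr => ?_, by simp [wProfile, spence],
    (hasDerivAt_comp_sq_zero wProfile_isBigO).deriv⟩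
  have hexp : exp (2 * η₀ r) = ((1 + r ^ 2) ^ 2)⁻¹ := by
    rw [hη₀, mul_neg, exp_neg,
      show 2 * log (1 + r ^ 2) = log ((1 + r ^ 2) ^ 2) by simp [log_pow], exp_log (by positivity)]
  have hΔ := deriv_deriv_add_deriv_div_comp_sq hr.ne'
    ((lt_mem_nhds (by positivity)).mono fun u hu => hasDerivAt_wProfile hu)
    (hasDerivAt_wFlux (by positivity))
  rw [show ∀ a b : ℝ, -a - b = -(a + b) from fun a b => by ring, hΔ, hexp, hη₀]
  simp only [wProfile]
  field_simp
  ring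
end

section
/- The function w - η₀ is bounded on [0,∞), where w(r) = η₀(r) + 2r²/(1+r²) - (1/2)η₀(r)² + ((1-r²)/(1+r²))∫₁^{1+r²} (log t)/(1-t) dt and η₀(r) = -log(1+r²). More precisely |w'(r) - η₀'(r)| ≤ C/(1+r²) for all r ≥ 0 and some constant C. -/
/-!
Put `x = 1 + r²` and `G(x) = ∫₁ˣ log t / (t - 1) dt`, so that
`w - η₀ = 2r²/x - ½ (log x)² - ((1 - r²)/x) G(x)`. On differentiating, the term `-(2r/x) log x`
coming from `(log x)²` cancels the bulk of the derivative of the last term, which leaves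
`4r (1 + G(x))/x² - 2 log x/(r x)`. Since `log (1 + r²) ≤ 2r`, the map `r ↦ G(1 + r²)` has
derivative at most `4`, so `|G(1 + r²)| ≤ 4r`, and the derivative is at most `22/(1 + r²)`.
Comparing with `22 arctan` bounds `w - η₀` by `11π`.
-/

open Real MeasureTheory intervalIntegral

lemma abs_sub_le_of_abs_hasDerivAt_le {f f' g g' : ℝ → ℝ} {a b : ℝ}
    (hf : ∀ x ≥ a, HasDerivAt f (f' x) x) (hg : ∀ x, HasDerivAt g (g' x) x)
    (hbound : ∀ x ≥ a, |f' x| ≤ g' x) (hab : a ≤ b) :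
    |f b - f a| ≤ g b - g a :=
  image_norm_le_of_norm_deriv_right_le_deriv_boundary (f := fun x => f x - f a)
    (B := fun x => g x - g a)
    (fun x hx => ((hf x hx.1).continuousAt.sub continuousAt_const).continuousWithinAt)
    (fun x hx => ((hf x hx.1).sub_const (f a)).hasDerivWithinAt)
    (by simp) (fun x => (hg x).sub_const (g a)) (fun x hx => hbound x hx.1) ⟨hab, le_rfl⟩

lemma log_one_add_sq_le {r : ℝ} (hr : 0 ≤ r) : log (1 + r ^ 2) ≤ 2 * r := by
  rw [log_le_iff_le_exp (by positivity)]
  nlinarith [quadratic_le_exp_of_nonneg (by positivity : 0 ≤ 2 * r)]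

lemma hasDerivAt_one_add_sq (r : ℝ) : HasDerivAt (fun r : ℝ => 1 + r ^ 2) (2 * r) r := by
  simpa using (hasDerivAt_pow 2 r).const_add 1

lemma dslope_log_one_add_sq {r : ℝ} (hr : r ≠ 0) :
    dslope log 1 (1 + r ^ 2) = log (1 + r ^ 2) / r ^ 2 := by
  rw [dslope_of_ne _ (by simp [hr]), slope_def_field, log_one, sub_zero, add_sub_cancel_left]

lemma continuousOn_dslope_log : ContinuousOn (dslope log 1) (Set.Ioi 0) :=
  (continuousOn_dslope (Ioi_mem_nhds one_pos)).2
    ⟨continuousOn_log.mono fun _ hx => ne_of_gt hx, differentiableAt_log one_ne_zero⟩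

/- `dslope log 1` is `t ↦ log t / (t - 1)` with its continuous value `1` at `t = 1`, where
`log t / (1 - t)` takes the junk value `0`. -/
lemma integral_log_div_one_sub (x : ℝ) :
    ∫ t in (1 : ℝ)..x, log t / (1 - t) = -∫ t in (1 : ℝ)..x, dslope log 1 t := by
  rw [← intervalIntegral.integral_neg]
  refine integral_congr_ae ?_
  filter_upwards [Measure.ae_ne volume 1] with t ht _
  rw [dslope_of_ne _ ht, slope_def_field, log_one, sub_zero, ← div_neg, neg_sub]

noncomputable def integralDslopeLog (x : ℝ) : ℝ := ∫ t in (1 : ℝ)..x, dslope log 1 t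

lemma hasDerivAt_integralDslopeLog {x : ℝ} (hx : 0 < x) :
    HasDerivAt integralDslopeLog (dslope log 1 x) x := by
  have hsub : Set.uIcc 1 x ⊆ Set.Ioi 0 := fun t ht =>
    lt_of_lt_of_le (lt_min one_pos hx) ht.1
  exact integral_hasDerivAt_right ((continuousOn_dslope_log.mono hsub).intervalIntegrable)
    (continuousOn_dslope_log.stronglyMeasurableAtFilter isOpen_Ioi x hx)
    (continuousOn_dslope_log.continuousAt (Ioi_mem_nhds hx))

lemma abs_integralDslopeLog_one_add_sq_le {r : ℝ} (hr : 0 ≤ r) :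
    |integralDslopeLog (1 + r ^ 2)| ≤ 4 * r := by
  have hderiv : ∀ s, HasDerivAt (fun s => integralDslopeLog (1 + s ^ 2))
      (dslope log 1 (1 + s ^ 2) * (2 * s)) s := fun s =>
    (hasDerivAt_integralDslopeLog (by positivity)).comp s (hasDerivAt_one_add_sq s)
  have hbound : ∀ s ≥ (0 : ℝ), |dslope log 1 (1 + s ^ 2) * (2 * s)| ≤ 4 := fun s hs => by
    rcases hs.eq_or_lt with rfl | hs
    · norm_num
    have hlog := log_nonneg (by nlinarith : (1 : ℝ) ≤ 1 + s ^ 2)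
    rw [dslope_log_one_add_sq hs.ne', abs_of_nonneg (by positivity),
      div_mul_eq_mul_div, div_le_iff₀ (by positivity)]
    nlinarith [log_one_add_sq_le hs.le]
  simpa [integralDslopeLog] using abs_sub_le_of_abs_hasDerivAt_le (fun s _ => hderiv s)
    (g' := fun _ => 4)
    (fun s => by simpa using (hasDerivAt_id s).const_mul (4 : ℝ)) hbound hr
      |>.trans_eq (by ring)

noncomputable def correction (r : ℝ) : ℝ :=
  2 * r ^ 2 / (1 + r ^ 2) - 1 / 2 * log (1 + r ^ 2) ^ 2
    - (1 - r ^ 2) / (1 + r ^ 2) * integralDslopeLog (1 + r ^ 2)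

noncomputable def correctionDeriv (r : ℝ) : ℝ :=
  4 * r * (1 + integralDslopeLog (1 + r ^ 2)) / (1 + r ^ 2) ^ 2
    - 2 * log (1 + r ^ 2) / (r * (1 + r ^ 2))

lemma hasDerivAt_correction (r : ℝ) : HasDerivAt correction (correctionDeriv r) r := by
  have hx : 1 + r ^ 2 ≠ 0 := by positivity
  have hsq := hasDerivAt_one_add_sq r
  have hraw : HasDerivAt correction _ r := (((hasDerivAt_pow 2 r).const_mul 2).div hsq hx).sub
    ((((hasDerivAt_log hx).comp r hsq).pow 2).const_mul (1 / 2)) |>.sub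
    ((((hasDerivAt_pow 2 r).const_sub 1).div hsq hx).mul
      ((hasDerivAt_integralDslopeLog (by positivity)).comp r hsq))
  rcases eq_or_ne r 0 with rfl | hr
  · simpa [correctionDeriv] using hraw
  convert hraw using 1
  simp only [correctionDeriv, dslope_log_one_add_sq hr, Function.comp_apply, Pi.div_apply]
  field_simp
  ring

lemma abs_correctionDeriv_le {r : ℝ} (hr : 0 ≤ r) :
    |correctionDeriv r| ≤ 22 / (1 + r ^ 2) := by
  rcases hr.eq_or_lt with rfl | hr
  · norm_num [correctionDeriv]
  set x := 1 + r ^ 2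
  have hx0 : 0 < x := by positivity
  have hG := abs_integralDslopeLog_one_add_sq_le hr.le
  have hlog := log_one_add_sq_le hr.le
  have hlog0 := log_nonneg (by nlinarith : (1 : ℝ) ≤ x)
  have hfirst : |4 * r * (1 + integralDslopeLog x) / x ^ 2| ≤ 18 / x := by
    rw [abs_div, abs_mul, abs_of_pos (by positivity : 0 < 4 * r),
      abs_of_pos (by positivity : 0 < x ^ 2), div_le_div_iff₀ (by positivity) hx0]
    have h1 : |1 + integralDslopeLog x| ≤ 1 + 4 * r :=
      (abs_add_le _ _).trans (by rw [abs_one]; linarith)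
    have h2 : 4 * r * |1 + integralDslopeLog x| ≤ 18 * x := by
      nlinarith [mul_le_mul_of_nonneg_left h1 (by positivity : 0 ≤ 4 * r), sq_nonneg (r - 1)]
    nlinarith [mul_le_mul_of_nonneg_right h2 hx0.le]
  have hsecond : |2 * log x / (r * x)| ≤ 4 / x := by
    rw [abs_of_nonneg (by positivity), div_le_div_iff₀ (by positivity) hx0]
    nlinarith
  calc |correctionDeriv r|
      ≤ |4 * r * (1 + integralDslopeLog x) / x ^ 2| + |2 * log x / (r * x)| := abs_sub _ _
    _ ≤ 22 / x := by linarith [add_div 18 4 x]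

lemma correction_zero : correction 0 = 0 := by
  simp [correction, integralDslopeLog]

lemma abs_correction_le {r : ℝ} (hr : 0 ≤ r) : |correction r| ≤ 11 * π := by
  have h := abs_sub_le_of_abs_hasDerivAt_le (fun s _ => hasDerivAt_correction s)
    (fun s => (hasDerivAt_arctan s).const_mul 22)
    (fun s hs => (abs_correctionDeriv_le hs).trans_eq (mul_one_div _ _).symm) hr
  rw [correction_zero, sub_zero, arctan_zero, mul_zero, sub_zero] at h
  linarith [arctan_lt_pi_div_two r]

/-- `w - η₀` is bounded on `[0,∞)`, and more precisely
`|w'(r) - η₀'(r)| ≤ C/(1+r²)` for all `r ≥ 0` and some constant `C`. -/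
theorem stmt6 (η₀ w : ℝ → ℝ)
    (hη₀ : ∀ r, η₀ r = -Real.log (1 + r ^ 2))
    (hw : ∀ r, w r = η₀ r + 2 * r ^ 2 / (1 + r ^ 2) - (1 / 2) * (η₀ r) ^ 2
        + (1 - r ^ 2) / (1 + r ^ 2) * ∫ t in (1 : ℝ)..(1 + r ^ 2), Real.log t / (1 - t)) :
    (∃ M : ℝ, ∀ r ≥ (0 : ℝ), |w r - η₀ r| ≤ M) ∧
    (∃ C : ℝ, ∀ r ≥ (0 : ℝ), |deriv w r - deriv η₀ r| ≤ C / (1 + r ^ 2)) := by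
  have hw_eq : w = η₀ + correction := funext fun r => by
    rw [Pi.add_apply, hw, integral_log_div_one_sub, hη₀, correction, integralDslopeLog]
    ring
  have hη₀_diff (r : ℝ) : DifferentiableAt ℝ η₀ r := by
    rw [funext hη₀]
    fun_prop (disch := positivity)
  have hderiv (r : ℝ) : deriv w r - deriv η₀ r = correctionDeriv r := by
    rw [hw_eq, ((hη₀_diff r).hasDerivAt.add (hasDerivAt_correction r)).deriv,
      add_sub_cancel_left]
  refine ⟨⟨11 * π, fun r hr => ?_⟩, ⟨22, fun r hr => ?_⟩⟩
  · rw [hw_eq, Pi.add_apply, add_sub_cancel_left]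
    exact abs_correction_le hr
  · rw [hderiv]
    exact abs_correctionDeriv_le hr
end

section
/- Let ū solve the ODE -ū'' - ū'/r = ū e^{ū²} with ū(0) = μ > 0, ū'(0) = 0, on its maximal interval of existence. Then ū attains the value 0 at some finite radius τ(μ) < ∞. -/
open Real

/-- Every (global) solution of the radial ODE `-ū'' - ū'/r = ū e^{ū²}` with positive initial
value `ū(0) = μ > 0` and `ū'(0) = 0` attains the value `0` at some finite radius. -/
theorem stmt15 (μ : ℝ) (hμ : 0 < μ) (ub : ℝ → ℝ)
    (hcont : ContinuousOn ub (Set.Ici 0))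
    (hdiff : ∀ r > (0 : ℝ), DifferentiableAt ℝ ub r)
    (hdiff2 : ∀ r > (0 : ℝ), DifferentiableAt ℝ (deriv ub) r)
    (hode : ∀ r > (0 : ℝ),
      -(deriv (deriv ub) r) - deriv ub r / r = ub r * Real.exp ((ub r) ^ 2))
    (h0 : ub 0 = μ)
    (h0' : Filter.Tendsto (deriv ub) (nhdsWithin 0 (Set.Ioi 0)) (nhds 0)) :
    ∃ r > (0 : ℝ), ub r = 0 := by
  by_contra hcon
  push_neg at hcon
  -- Step 0: positivity of ub on [0, ∞)
  have hpos : ∀ r, 0 ≤ r → 0 < ub r := by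
    intro r hr
    by_contra hle
    push_neg at hle
    have hrne : r ≠ 0 := by
      intro h; rw [h, h0] at hle; linarith
    have hr0 : 0 < r := lt_of_le_of_ne hr (Ne.symm hrne)
    have hiv : (0:ℝ) ∈ Set.Icc (ub r) (ub 0) := ⟨hle, by rw [h0]; linarith⟩
    have := intermediate_value_Icc' hr (hcont.mono (Set.Icc_subset_Ici_self)) hiv
    obtain ⟨c, hc, hc0⟩ := this
    have hcne : c ≠ 0 := by
      intro h; rw [h, h0] at hc0; linarith
    exact hcon c (lt_of_le_of_ne hc.1 (Ne.symm hcne)) hc0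
  -- w(r) = r * ub'(r)
  set w : ℝ → ℝ := fun r => r * deriv ub r with hw
  have hw' : ∀ r, 0 < r → HasDerivAt w (-(r * (ub r * Real.exp ((ub r) ^ 2)))) r := by
    intro r hr
    have h1 : HasDerivAt w (1 * deriv ub r + r * deriv (deriv ub) r) r :=
      (hasDerivAt_id r).mul (hdiff2 r hr).hasDerivAt
    convert h1 using 1
    have hode' := hode r hr
    have hrne : r ≠ 0 := ne_of_gt hr
    field_simp at hode' ⊢
    linarith [hode']
  have hwcont : ContinuousOn w (Set.Ioi 0) := fun r hr =>
    ((hw' r hr).differentiableAt.continuousAt).continuousWithinAt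
  have hanti : StrictAntiOn w (Set.Ioi 0) := by
    apply strictAntiOn_of_deriv_neg (convex_Ioi 0) hwcont
    intro r hr
    rw [interior_Ioi] at hr
    rw [(hw' r hr).deriv]
    have h1 : 0 < ub r * Real.exp ((ub r) ^ 2) :=
      mul_pos (hpos r hr.le) (Real.exp_pos _)
    have hr' : (0:ℝ) < r := hr
    linarith [mul_pos hr' h1]
  -- limit of w at 0+
  have hlim : Filter.Tendsto w (nhdsWithin 0 (Set.Ioi 0)) (nhds 0) := by
    have h1 : Filter.Tendsto (fun r : ℝ => r) (nhdsWithin 0 (Set.Ioi 0)) (nhds 0) :=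
      Filter.tendsto_id.mono_left nhdsWithin_le_nhds
    have := h1.mul h0'
    simpa using this
  have hwle : ∀ s, 0 < s → w s ≤ 0 := by
    intro s hs
    refine ge_of_tendsto hlim ?_
    filter_upwards [Ioo_mem_nhdsGT_of_mem (Set.left_mem_Ico.mpr hs)] with t ht
    exact (hanti ht.1 hs ht.2).le
  have hwneg : ∀ s, 0 < s → w s < 0 := by
    intro s hs
    have h1 : w s < w (s/2) := hanti (Set.mem_Ioi.mpr (by positivity)) (Set.mem_Ioi.mpr hs) (by linarith)
    have h2 : w (s/2) ≤ 0 := hwle _ (by positivity)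
    linarith
  set ε : ℝ := -w 1 with hε
  have hεpos : 0 < ε := by
    have := hwneg 1 one_pos
    simp [hε]; linarith
  have hwle1 : ∀ r, 1 ≤ r → w r ≤ -ε := by
    intro r hr
    rcases eq_or_lt_of_le hr with h | h
    · rw [← h]; simp [hε]
    · have := hanti (Set.mem_Ioi.mpr one_pos) (Set.mem_Ioi.mpr (by linarith)) h
      simp [hε]; linarith
  have hd : ∀ r, 1 ≤ r → deriv ub r ≤ -ε / r := by
    intro r hr
    have hr0 : (0:ℝ) < r := by linarith
    have h1 : w r ≤ -ε := hwle1 r hr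
    have h2 : deriv ub r = w r / r := by
      rw [hw]; field_simp
    rw [h2]
    gcongr
  -- φ(r) = ub r + ε * log r is antitone on [1, ∞)
  set φ : ℝ → ℝ := fun r => ub r + ε * Real.log r with hφ
  have hφ' : ∀ r, 0 < r → HasDerivAt φ (deriv ub r + ε * r⁻¹) r := by
    intro r hr
    exact ((hdiff r hr).hasDerivAt).add ((Real.hasDerivAt_log (ne_of_gt hr)).const_mul ε)
  have hφanti : AntitoneOn φ (Set.Ici 1) := by
    apply antitoneOn_of_deriv_nonpos (convex_Ici 1)
    · intro r hr
      exact ((hφ' r (by exact lt_of_lt_of_le one_pos hr)).differentiableAt.continuousAt).continuousWithinAt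
    · intro r hr
      rw [interior_Ici] at hr
      exact (hφ' r (lt_trans one_pos hr)).differentiableAt.differentiableWithinAt
    · intro r hr
      rw [interior_Ici] at hr
      have hr0 : (0:ℝ) < r := lt_trans one_pos hr
      rw [(hφ' r hr0).deriv]
      have := hd r hr.le
      have h2 : deriv ub r + ε * r⁻¹ ≤ -ε/r + ε/r := by
        rw [← one_div, mul_one_div]
        linarith
      have h3 : -ε/r + ε/r = 0 := by ring
      linarith
  -- conclusion
  set R : ℝ := Real.exp ((ub 1 + 1) / ε) with hR
  have hub1 : 0 < ub 1 := hpos 1 one_pos.le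
  have hR1 : 1 ≤ R := by
    rw [hR]
    have : (0:ℝ) ≤ (ub 1 + 1) / ε := by positivity
    calc (1:ℝ) = Real.exp 0 := by simp
      _ ≤ Real.exp ((ub 1 + 1) / ε) := Real.exp_le_exp.mpr this
  have h1 : φ R ≤ φ 1 := hφanti (Set.self_mem_Ici) (Set.mem_Ici.mpr hR1) hR1
  have h2 : φ 1 = ub 1 := by simp [hφ]
  have h3 : φ R = ub R + (ub 1 + 1) := by
    rw [hφ, hR]
    simp only []
    rw [Real.log_exp]
    field_simp
  have : ub R ≤ -1 := by rw [h3, h2] at h1; linarith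
  have := hpos R (by linarith)
  linarith
end
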